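/- arXiv:1403.3684 — 4 statements merged into one kernel-verified Lean document; each statement's English description precedes it below -/
import Mathlib

section
/- Let n ≥ 1 and m₀ > 0. For each i = 1,…,n let qᵢ, q_{i_d} ∈ ℝ³ be unit vectors and let μ_{i_d} ∈ ℝ³ satisfy μ_{i_d} = ⟨q_{i_d}, μ_{i_d}⟩ q_{i_d}. Then ‖(1/m₀) Σᵢ (⟨qᵢ, μ_{i_d}⟩qᵢ − μ_{i_d})‖ ≤ (1/m₀) Σᵢ ‖μ_{i_d}‖ · ‖e_{q_i}‖, where e_{q_i} = q_{i_d} × qᵢ. -/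
open Matrix BigOperators

/-- The Euclidean inner product on ℝ³. -/
noncomputable def dot3 (a b : Fin 3 → ℝ) : ℝ := ∑ i, a i * b i

/-- The Euclidean norm on ℝ³. -/
noncomputable def norm3 (a : Fin 3 → ℝ) : ℝ := Real.sqrt (dot3 a a)

/-- The cross product on ℝ³. -/
def cross3 (a b : Fin 3 → ℝ) : Fin 3 → ℝ :=
  ![a 1 * b 2 - a 2 * b 1, a 2 * b 0 - a 0 * b 2, a 0 * b 1 - a 1 * b 0]

/-! For a unit vector `q`, `⟨q, μ⟩ q - μ` is minus the component of `μ` orthogonal to `q`, so its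
squared length is `‖μ‖² - ⟨q, μ⟩²`. When `μ = s q_d` with `q_d` a unit vector this equals
`s² (1 - ⟨q_d, q⟩²) = ‖μ‖² ‖q_d × q‖²` by Lagrange's identity, so each summand has norm exactly
`‖μ_{i_d}‖ ‖e_{q_i}‖` and the bound is the triangle inequality. -/

theorem dot3_eq_dotProduct (a b : Fin 3 → ℝ) : dot3 a b = a ⬝ᵥ b := rfl

theorem cross3_eq_crossProduct (a b : Fin 3 → ℝ) : cross3 a b = a ⨯₃ b := rfl

theorem norm3_eq_norm_toLp (a : Fin 3 → ℝ) : norm3 a = ‖WithLp.toLp 2 a‖ := by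
  rw [EuclideanSpace.norm_eq, norm3, dot3]
  simp [Real.norm_eq_abs, sq]

theorem norm3_smul_sum_le {ι : Type*} (s : Finset ι) {c : ℝ} (hc : 0 ≤ c)
    (v : ι → Fin 3 → ℝ) : norm3 (c • ∑ i ∈ s, v i) ≤ c * ∑ i ∈ s, norm3 (v i) := by
  simp only [norm3_eq_norm_toLp, WithLp.toLp_smul, WithLp.toLp_sum, norm_smul,
    Real.norm_of_nonneg hc]
  exact mul_le_mul_of_nonneg_left (norm_sum_le _ _) hc

section CommRing

variable {R : Type*} [CommRing R]

theorem dotProduct_self_proj_sub {n : Type*} [Fintype n] {q : n → R} (hq : q ⬝ᵥ q = 1)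
    (μ : n → R) :
    ((q ⬝ᵥ μ) • q - μ) ⬝ᵥ ((q ⬝ᵥ μ) • q - μ) = μ ⬝ᵥ μ - (q ⬝ᵥ μ) ^ 2 := by
  simp only [sub_dotProduct, dotProduct_sub, smul_dotProduct, dotProduct_smul, smul_eq_mul, hq,
    dotProduct_comm μ q]
  ring

theorem dotProduct_self_proj_sub_eq_mul_cross {q qd μ : Fin 3 → R} (hq : q ⬝ᵥ q = 1)
    (hqd : qd ⬝ᵥ qd = 1) (hμ : μ = (qd ⬝ᵥ μ) • qd) :
    ((q ⬝ᵥ μ) • q - μ) ⬝ᵥ ((q ⬝ᵥ μ) • q - μ) = (μ ⬝ᵥ μ) * (qd ⨯₃ q ⬝ᵥ qd ⨯₃ q) := by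
  rw [dotProduct_self_proj_sub hq, cross_dot_cross, hq, hqd, hμ]
  simp only [smul_dotProduct, dotProduct_smul, smul_eq_mul, hqd, dotProduct_comm q qd]
  ring

end CommRing

theorem norm3_proj_sub {q qd μ : Fin 3 → ℝ} (hq : dot3 q q = 1) (hqd : dot3 qd qd = 1)
    (hμ : μ = dot3 qd μ • qd) :
    norm3 (dot3 q μ • q - μ) = norm3 μ * norm3 (cross3 qd q) := by
  simp only [norm3, dot3_eq_dotProduct, cross3_eq_crossProduct] at *
  rw [dotProduct_self_proj_sub_eq_mul_cross hq hqd hμ,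
    Real.sqrt_mul (by simpa using dotProduct_self_star_nonneg μ)]

theorem Yx_error_bound_general (n : ℕ) (m₀ : ℝ) (hm₀ : 0 < m₀)
    (q qd : Fin n → (Fin 3 → ℝ))
    (hq : ∀ i, dot3 (q i) (q i) = 1) (hqd : ∀ i, dot3 (qd i) (qd i) = 1)
    (μd : Fin n → (Fin 3 → ℝ)) (hμd : ∀ i, μd i = dot3 (qd i) (μd i) • qd i) :
    norm3 ((1 / m₀) • ∑ i, (dot3 (q i) (μd i) • q i - μd i)) ≤
      (1 / m₀) * ∑ i, norm3 (μd i) * norm3 (cross3 (qd i) (q i)) := by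
  refine (norm3_smul_sum_le _ (by positivity) _).trans_eq ?_
  simp only [norm3_proj_sub (hq _) (hqd _) (hμd _)]

/-- With unit vectors `qᵢ, q_{i_d}` and `μ_{i_d} = ⟨q_{i_d},μ_{i_d}⟩q_{i_d}`,
the error term `Y_x = (1/m₀)Σᵢ(⟨qᵢ,μ_{i_d}⟩qᵢ − μ_{i_d})` is bounded by
`(1/m₀)Σᵢ ‖μ_{i_d}‖‖e_{q_i}‖` with `e_{q_i} = q_{i_d} × qᵢ`. -/
theorem Yx_error_bound (n : ℕ) (hn : 1 ≤ n) (m₀ : ℝ) (hm₀ : 0 < m₀)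
    (q qd : Fin n → (Fin 3 → ℝ))
    (hq : ∀ i, dot3 (q i) (q i) = 1) (hqd : ∀ i, dot3 (qd i) (qd i) = 1)
    (μd : Fin n → (Fin 3 → ℝ)) (hμd : ∀ i, μd i = dot3 (qd i) (μd i) • qd i) :
    norm3 ((1 / m₀) • ∑ i, (dot3 (q i) (μd i) • q i - μd i)) ≤
      (1 / m₀) * ∑ i, norm3 (μd i) * norm3 (cross3 (qd i) (q i)) :=
  Yx_error_bound_general n m₀ hm₀ q qd hq hqd μd hμd
end

section
/- Let Q be a real 3×3 special orthogonal matrix. Then for every v ∈ ℝ³, ‖(1/2)(tr[Q]·I − Q)v‖ ≤ ‖v‖. In particular, along the attitude error dynamics ė_R = (1/2)(tr[RᵀR_c]I − RᵀR_c)e_Ω one has ‖ė_R‖ ≤ ‖e_Ω‖. -/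
open Matrix BigOperators

private lemma so3_quad (t n s m4 : ℝ) (hn : 0 ≤ n)
    (hb : m4 = 2*(t+1)*s + 2*(1-t)*n) (hcs : 4*s^2 ≤ n*m4)
    (ht1 : -1 ≤ t) (ht3 : t ≤ 3) : t^2*n - 2*t*s ≤ 3*n := by
  have hbN : n*m4 = 2*(t+1)*(n*s) + 2*(1-t)*n^2 := by rw [hb]; ring
  have hXY : (2*s - 2*n) * (2*s - (t-1)*n) ≤ 0 := by nlinarith [hcs, hbN]
  have h3t : (0:ℝ) ≤ 3 - t := by linarith
  rcases le_total 0 t with ht | ht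
  · have hY : 0 ≤ 2*s - (t-1)*n := by
      nlinarith [hXY, mul_nonneg h3t hn, sq_nonneg (2*s - (t-1)*n)]
    nlinarith [mul_nonneg ht hY, mul_nonneg h3t hn]
  · have hX : 2*s - 2*n ≤ 0 := by
      nlinarith [hXY, mul_nonneg h3t hn, sq_nonneg (2*s - 2*n)]
    nlinarith [mul_nonneg (neg_nonneg.2 ht) (neg_nonneg.2 hX),
      mul_nonneg (mul_nonneg h3t (by linarith : (0:ℝ) ≤ 1+t)) hn]

private lemma so3_lag (v0 v1 v2 w0 w1 w2 : ℝ) :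
    (v0*w0+v1*w1+v2*w2)^2 ≤ (v0^2+v1^2+v2^2)*(w0^2+w1^2+w2^2) := by
  nlinarith [sq_nonneg (v0*w1 - v1*w0), sq_nonneg (v0*w2 - v2*w0), sq_nonneg (v1*w2 - v2*w1)]

private lemma so3_trace (a b c d e f g h i : ℝ)
    (hr1 : e*i - f*h = a) (hr2 : f*g - d*i = b) (hr3 : d*h - e*g = c)
    (hr4 : c*h - b*i = d) (hr5 : a*i - c*g = e) (hr6 : b*g - a*h = f)
    (hr7 : b*f - c*e = g) (hr8 : c*d - a*f = h) (hr9 : a*e - b*d = i)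
    (hc1 : a*a+d*d+g*g = 1) (hc2 : b*b+e*e+h*h = 1) (hc3 : c*c+f*f+i*i = 1) :
    (-1 ≤ a+e+i ∧ a+e+i ≤ 3) := by
  have hd : 4*(1+(a+e+i)) = (1+(a+e+i))^2 + (f-h)^2 + (c-g)^2 + (b-d)^2 := by linear_combination ((-2) + (-2)*a) * hr1 + (b) * hr2 + (c) * hr3 + ((-2)*d) * hr4 + ((-2) + e) * hr5 + (f) * hr6 + ((-2)*g) * hr7 + (h) * hr8 + ((-2) + i) * hr9 + ((-3)) * hc1
  constructor
  · nlinarith [hd, sq_nonneg (1+(a+e+i)), sq_nonneg (f-h), sq_nonneg (c-g), sq_nonneg (b-d)]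
  · nlinarith [sq_nonneg (a-1), sq_nonneg (e-1), sq_nonneg (i-1), sq_nonneg d, sq_nonneg g,
      sq_nonneg b, sq_nonneg h, sq_nonneg c, sq_nonneg f]

private lemma so3_hb (a b c d e f g h i v0 v1 v2 : ℝ)
    (hc1 : a*a+d*d+g*g = 1)
    (hr1 : e*i - f*h = a) (hr2 : f*g - d*i = b) (hr3 : d*h - e*g = c)
    (hr4 : c*h - b*i = d) (hr5 : a*i - c*g = e) (hr6 : b*g - a*h = f)
    (hr7 : b*f - c*e = g) (hr8 : c*d - a*f = h) (hr9 : a*e - b*d = i) :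
    (2*a*v0+(b+d)*v1+(c+g)*v2)^2 + ((b+d)*v0+2*e*v1+(f+h)*v2)^2 + ((c+g)*v0+(f+h)*v1+2*i*v2)^2 = 2*((a+e+i)+1)*(v0*(a*v0+b*v1+c*v2)+v1*(d*v0+e*v1+f*v2)+v2*(g*v0+h*v1+i*v2)) + 2*(1-(a+e+i))*(v0^2+v1^2+v2^2) := by
  linear_combination ((2)*v0*v1 + (-2)*h*v0*v2 + (-2)*e*v0*v1 + (-2)*c*v1*v2 + (-1)*b*v1*v1 + (-1)*b*v0*v0) * hr2 + ((2)*v0*v2 + (-2)*i*v0*v2 + (-2)*f*v0*v1 + (-1)*c*v2*v2 + (-1)*c*v0*v0) * hr3 + ((2)*v0*v1 + (-2)*g*v1*v2 + (-2)*f*v0*v2 + (-2)*e*v0*v1 + (2)*d*v2*v2 + d*v1*v1 + d*v0*v0) * hr4 + ((-2)*v2*v2 + (-2)*v0*v0 + (-2)*h*v1*v2 + (-2)*f*v1*v2 + (-2)*e*v1*v1) * hr5 + ((2)*v0*v2 + (-2)*i*v0*v2 + (-2)*h*v0*v1 + g*v2*v2 + (2)*g*v1*v1 + g*v0*v0) *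 hr7 + ((-2)*v1*v1 + (-2)*v0*v0 + (-2)*i*v2*v2) * hr9 + ((2)*v2*v2 + (2)*v1*v1 + (2)*v0*v0) * hc1 + ((-2)*v2*v2 + (-2)*v1*v1 + (-2)*g*v0*v2 + (-2)*d*v0*v1 + (-2)*c*v0*v2 + (-2)*b*v0*v1 + (2)*a*v2*v2 + (2)*a*v1*v1) * hr1 + ((2)*v1*v2 + (-2)*i*v1*v2 + (-1)*f*v2*v2 + (-1)*f*v1*v1) * hr6 + ((2)*v1*v2 + (-2)*i*v1*v2 + (-1)*h*v2*v2 + (-1)*h*v1*v1) * hr8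

set_option maxHeartbeats 1000000 in
private lemma so3_key (a b c d e f g h i v0 v1 v2 : ℝ)
    (hc1 : a*a+d*d+g*g = 1) (hc2 : b*b+e*e+h*h = 1) (hc3 : c*c+f*f+i*i = 1)
    (ho12 : a*b+d*e+g*h = 0) (ho13 : a*c+d*f+g*i = 0) (ho23 : b*c+e*f+h*i = 0)
    (hdet : a*(e*i - f*h) - b*(d*i - f*g) + c*(d*h - e*g) = 1) :
    (a+e+i)^2*(v0^2+v1^2+v2^2) - 2*(a+e+i)*(v0*(a*v0+b*v1+c*v2)+v1*(d*v0+e*v1+f*v2)+v2*(g*v0+h*v1+i*v2)) ≤ 3*(v0^2+v1^2+v2^2) := by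
  have hr1 : e*i - f*h = a := by linear_combination (f*h + (-1)*e*i) * hc1 + ((-1)*f*g + d*i) * ho12 + (e*g + (-1)*d*h) * ho13 + (a) * hdet
  have hr2 : f*g - d*i = b := by linear_combination ((-1)*f*g + d*i) * hc2 + (f*h + (-1)*e*i) * ho12 + (e*g + (-1)*d*h) * ho23 + (b) * hdet
  have hr3 : d*h - e*g = c := by linear_combination (e*g + (-1)*d*h) * hc3 + (f*h + (-1)*e*i) * ho13 + ((-1)*f*g + d*i) * ho23 + (c) * hdet
  have hr4 : c*h - b*i = d := by linear_combination ((-1)*c*h + b*i) * hc1 + (c*g + (-1)*a*i) * ho12 + ((-1)*b*g + a*h) * ho13 + (d) * hdet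
  have hr5 : a*i - c*g = e := by linear_combination (c*g + (-1)*a*i) * hc2 + ((-1)*c*h + b*i) * ho12 + ((-1)*b*g + a*h) * ho23 + (e) * hdet
  have hr6 : b*g - a*h = f := by linear_combination ((-1)*b*g + a*h) * hc3 + ((-1)*c*h + b*i) * ho13 + (c*g + (-1)*a*i) * ho23 + (f) * hdet
  have hr7 : b*f - c*e = g := by linear_combination (c*e + (-1)*b*f) * hc1 + ((-1)*c*d + a*f) * ho12 + (b*d + (-1)*a*e) * ho13 + (g) * hdet
  have hr8 : c*d - a*f = h := by linear_combination ((-1)*c*d + a*f) * hc2 + (c*e + (-1)*b*f) * ho12 + (b*d + (-1)*a*e) * ho23 + (h) * hdet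
  have hr9 : a*e - b*d = i := by linear_combination (b*d + (-1)*a*e) * hc3 + (c*e + (-1)*b*f) * ho13 + ((-1)*c*d + a*f) * ho23 + (i) * hdet
  have hb := so3_hb a b c d e f g h i v0 v1 v2 hc1 hr1 hr2 hr3 hr4 hr5 hr6 hr7 hr8 hr9
  have ht := so3_trace a b c d e f g h i hr1 hr2 hr3 hr4 hr5 hr6 hr7 hr8 hr9 hc1 hc2 hc3
  have hn : (0:ℝ) ≤ (v0^2+v1^2+v2^2) := by positivity
  have hcs : 4*(v0*(a*v0+b*v1+c*v2)+v1*(d*v0+e*v1+f*v2)+v2*(g*v0+h*v1+i*v2))^2 ≤ (v0^2+v1^2+v2^2)*((2*a*v0+(b+d)*v1+(c+g)*v2)^2 + ((b+d)*v0+2*e*v1+(f+h)*v2)^2 + ((c+g)*v0+(f+h)*v1+2*i*v2)^2) := by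
    calc 4*(v0*(a*v0+b*v1+c*v2)+v1*(d*v0+e*v1+f*v2)+v2*(g*v0+h*v1+i*v2))^2 = (v0*(2*a*v0+(b+d)*v1+(c+g)*v2)+v1*((b+d)*v0+2*e*v1+(f+h)*v2)+v2*((c+g)*v0+(f+h)*v1+2*i*v2))^2 := by ring
      _ ≤ (v0^2+v1^2+v2^2)*((2*a*v0+(b+d)*v1+(c+g)*v2)^2 + ((b+d)*v0+2*e*v1+(f+h)*v2)^2 + ((c+g)*v0+(f+h)*v1+2*i*v2)^2) := so3_lag v0 v1 v2 (2*a*v0+(b+d)*v1+(c+g)*v2) ((b+d)*v0+2*e*v1+(f+h)*v2) ((c+g)*v0+(f+h)*v1+2*i*v2)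
  exact so3_quad (a+e+i) (v0^2+v1^2+v2^2) (v0*(a*v0+b*v1+c*v2)+v1*(d*v0+e*v1+f*v2)+v2*(g*v0+h*v1+i*v2)) ((2*a*v0+(b+d)*v1+(c+g)*v2)^2 + ((b+d)*v0+2*e*v1+(f+h)*v2)^2 + ((c+g)*v0+(f+h)*v1+2*i*v2)^2) hn hb hcs ht.1 ht.2

/-- For `Q ∈ SO(3)` and every `v ∈ ℝ³`,
`‖(1/2)(tr[Q]I − Q)v‖ ≤ ‖v‖`. -/
theorem attitude_error_dynamics_matrix_bound (Q : Matrix (Fin 3) (Fin 3) ℝ)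
    (hQ : Qᵀ * Q = 1) (hdet : Q.det = 1) :
    ∀ v : Fin 3 → ℝ,
      norm3 (((1 / 2 : ℝ) • ((Matrix.trace Q) • (1 : Matrix (Fin 3) (Fin 3) ℝ) - Q)) *ᵥ v)
        ≤ norm3 v := by
  intro v
  have hcol : ∀ j k : Fin 3, (∑ l, Q l j * Q l k) = if j = k then (1:ℝ) else 0 := by
    intro j k
    have h := congrFun (congrFun hQ j) k
    simpa [Matrix.mul_apply, Matrix.transpose_apply, Matrix.one_apply] using h
  have hc1 := hcol 0 0; have hc2 := hcol 1 1; have hc3 := hcol 2 2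
  have ho12 := hcol 0 1; have ho13 := hcol 0 2; have ho23 := hcol 1 2
  simp [Fin.sum_univ_three] at hc1 hc2 hc3 ho12 ho13 ho23
  rw [Matrix.det_fin_three] at hdet
  have hkey := so3_key (Q 0 0) (Q 0 1) (Q 0 2) (Q 1 0) (Q 1 1) (Q 1 2) (Q 2 0) (Q 2 1) (Q 2 2)
      (v 0) (v 1) (v 2)
      (by linear_combination hc1) (by linear_combination hc2) (by linear_combination hc3)
      (by linear_combination ho12) (by linear_combination ho13) (by linear_combination ho23)
      (by linear_combination hdet)
  have hQn : (Q 0 0 * v 0 + Q 0 1 * v 1 + Q 0 2 * v 2)^2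
      + (Q 1 0 * v 0 + Q 1 1 * v 1 + Q 1 2 * v 2)^2
      + (Q 2 0 * v 0 + Q 2 1 * v 1 + Q 2 2 * v 2)^2 = v 0^2 + v 1^2 + v 2^2 := by
    linear_combination (v 0)^2*hc1 + (v 1)^2*hc2 + (v 2)^2*hc3
      + 2*(v 0)*(v 1)*ho12 + 2*(v 0)*(v 2)*ho13 + 2*(v 1)*(v 2)*ho23
  unfold norm3
  apply Real.sqrt_le_sqrt
  simp only [dot3, Matrix.mulVec, dotProduct, Fin.sum_univ_three, Matrix.smul_apply,
    Matrix.sub_apply, Matrix.one_apply, Matrix.trace, Matrix.diag, smul_eq_mul]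
  norm_num [Fin.ext_iff]
  linarith [hkey, hQn]
end

section
/- Let k_R, k_Ω, λ_m, λ_M, ψ_R, c₃ be real numbers with k_R > 0, k_Ω > 0, 0 < λ_m ≤ λ_M, 0 < ψ_R < 2, and 0 < c₃ < min{ √(k_R λ_m), 4k_Rk_Ωλ_m² / (k_Ω²λ_M + 4k_Rλ_m²) }. Then the three 2×2 matrices L₁ = [[k_R/2, −c₃/2], [−c₃/2, λ_m/2]], L₂ = [[k_R/(2−ψ_R), c₃/2], [c₃/2, λ_M/2]], and U = [[c₃k_R/λ_M, −c₃k_Ω/(2λ_m)], [−c₃k_Ω/(2λ_m), k_Ω − c₃]] are all positive definite. -/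
open Matrix BigOperators

/-!
A symmetric `2 × 2` matrix `!![a, b; b, c]` is positive definite as soon as `0 < a` and
`b² < ac`, because `a (a x² + 2 b x y + c y²) = (a x + b y)² + (a c - b²) y²`.
For `L₁` and `L₂` the determinant condition reduces to `c₃² < k_R λ_m` (for `L₂` via
`λ_m ≤ λ_M` and `2 - ψ_R < 2`); for `U` it is, after clearing denominators, exactly
`c₃ (k_Ω² λ_M + 4 k_R λ_m²) < 4 k_R k_Ω λ_m²`.
-/

namespace Matrix

variable {R : Type*} [CommRing R] [StarRing R] [TrivialStar R]

theorem dotProduct_mulVec_fin_two (a b c : R) (x : Fin 2 → R) :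
    star x ⬝ᵥ (!![a, b; b, c] *ᵥ x) = a * x 0 ^ 2 + 2 * b * x 0 * x 1 + c * x 1 ^ 2 := by
  simp only [dotProduct, mulVec, Fin.sum_univ_two, star_trivial, cons_val', cons_val_zero,
    cons_val_one, empty_val', cons_val_fin_one, of_apply, Pi.star_apply]
  ring

theorem posDef_fin_two_of_mul_self_lt [LinearOrder R] [IsStrictOrderedRing R] {a b c : R}
    (ha : 0 < a) (h : b * b < a * c) : (!![a, b; b, c]).PosDef := by
  refine posDef_iff_dotProduct_mulVec.2 ⟨?_, fun x hx => ?_⟩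
  · ext i j
    fin_cases i <;> fin_cases j <;> simp
  rw [dotProduct_mulVec_fin_two]
  rcases eq_or_ne (x 1) 0 with h1 | h1
  · have h0 : x 0 ≠ 0 := fun h0 => hx (funext fun i => by fin_cases i <;> assumption)
    simp only [h1, mul_zero, ne_eq, OfNat.ofNat_ne_zero, not_false_eq_true, zero_pow, add_zero]
    positivity
  · have hdet : 0 < a * c - b * b := sub_pos.2 h
    have hsquares : a * (a * x 0 ^ 2 + 2 * b * x 0 * x 1 + c * x 1 ^ 2) =
        (a * x 0 + b * x 1) ^ 2 + (a * c - b * b) * x 1 ^ 2 := by ring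
    refine pos_of_mul_pos_right (hsquares ▸ ?_) ha.le
    positivity

end Matrix

theorem boundary_layer_matrices_posdef_general (kR kΩ lm lM ψR c₃ : ℝ)
    (hkR : 0 < kR) (hlm : 0 < lm) (hl : lm ≤ lM)
    (hψ : 0 < ψR) (hψ2 : ψR < 2) (hc₃ : 0 < c₃)
    (hc₃' : c₃ < min (Real.sqrt (kR * lm))
      (4 * kR * kΩ * lm ^ 2 / (kΩ ^ 2 * lM + 4 * kR * lm ^ 2))) :
    (!![kR / 2, -c₃ / 2; -c₃ / 2, lm / 2]).PosDef ∧
    (!![kR / (2 - ψR), c₃ / 2; c₃ / 2, lM / 2]).PosDef ∧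
    (!![c₃ * kR / lM, -c₃ * kΩ / (2 * lm); -c₃ * kΩ / (2 * lm), kΩ - c₃]).PosDef := by
  have hlM : 0 < lM := hlm.trans_le hl
  have hψ2' : 0 < 2 - ψR := by linarith
  obtain ⟨hsqrt, hfrac⟩ := lt_min_iff.1 hc₃'
  have hsq : c₃ ^ 2 < kR * lm := (Real.lt_sqrt hc₃.le).1 hsqrt
  have hkey : c₃ * (kΩ ^ 2 * lM + 4 * kR * lm ^ 2) < 4 * kR * kΩ * lm ^ 2 :=
    (lt_div_iff₀ (by positivity)).1 hfrac
  refine ⟨posDef_fin_two_of_mul_self_lt (by positivity) (by nlinarith),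
    posDef_fin_two_of_mul_self_lt (by positivity) ?_,
    posDef_fin_two_of_mul_self_lt (by positivity) ?_⟩
  · rw [show kR / (2 - ψR) * (lM / 2) = kR * lM / 2 / (2 - ψR) by ring, lt_div_iff₀ hψ2']
    nlinarith [mul_le_mul_of_nonneg_left hl hkR.le]
  · rw [show -c₃ * kΩ / (2 * lm) * (-c₃ * kΩ / (2 * lm)) = c₃ ^ 2 * kΩ ^ 2 / (4 * lm ^ 2) by
        field_simp; ring,
      show c₃ * kR / lM * (kΩ - c₃) = c₃ * kR * (kΩ - c₃) / lM by ring,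
      div_lt_div_iff₀ (by positivity) hlM]
    nlinarith

/-- Under the gain condition
`0 < c₃ < min{√(k_Rλ_m), 4k_Rk_Ωλ_m²/(k_Ω²λ_M + 4k_Rλ_m²)}`, the matrices
`L₁`, `L₂`, `U` of the boundary-layer Lyapunov analysis are positive definite. -/
theorem boundary_layer_matrices_posdef (kR kΩ lm lM ψR c₃ : ℝ)
    (hkR : 0 < kR) (hkΩ : 0 < kΩ) (hlm : 0 < lm) (hl : lm ≤ lM)
    (hψ : 0 < ψR) (hψ2 : ψR < 2) (hc₃ : 0 < c₃)
    (hc₃' : c₃ < min (Real.sqrt (kR * lm))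
      (4 * kR * kΩ * lm ^ 2 / (kΩ ^ 2 * lM + 4 * kR * lm ^ 2))) :
    (!![kR / 2, -c₃ / 2; -c₃ / 2, lm / 2]).PosDef ∧
    (!![kR / (2 - ψR), c₃ / 2; c₃ / 2, lM / 2]).PosDef ∧
    (!![c₃ * kR / lM, -c₃ * kΩ / (2 * lm); -c₃ * kΩ / (2 * lm), kΩ - c₃]).PosDef :=
  boundary_layer_matrices_posdef_general kR kΩ lm lM ψR c₃ hkR hlm hl hψ hψ2 hc₃ hc₃'
end

section
/- Let k_R, k_Ω, c₃, λ_m, λ_M be positive reals with λ_m ≤ λ_M, let J be a symmetric invertible real 3×3 matrix satisfying λ_m‖v‖² ≤ vᵀJv ≤ λ_M‖v‖² for all v ∈ ℝ³, and let a, b, d ∈ ℝ³ with ‖d‖ ≤ ‖b‖. Then ⟨b + c₃J⁻¹a, −k_R a − k_Ω b⟩ + k_R⟨a, b⟩ + c₃⟨d, b⟩ ≤ −ζᵀUζ, where ζ = (‖a‖, ‖b‖) ∈ ℝ² and U = [[c₃k_R/λ_M, −c₃k_Ω/(2λ_m)], [−c₃k_Ω/(2λ_m), k_Ω − c₃]].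 (This is the pointwise estimate ε𝒲̇ ≤ −ζᵀUζ for the boundary-layer Lyapunov function, with a = ē_R, b = e_Ω, and d = ė_R satisfying ‖ė_R‖ ≤ ‖e_Ω‖.) -/
open Matrix BigOperators

lemma dot3_self_nonneg (x : Fin 3 → ℝ) : 0 ≤ dot3 x x :=
  Finset.sum_nonneg fun i _ => mul_self_nonneg _

lemma norm3_nonneg (x : Fin 3 → ℝ) : 0 ≤ norm3 x := Real.sqrt_nonneg _

lemma norm3_sq (x : Fin 3 → ℝ) : norm3 x ^ 2 = dot3 x x :=
  Real.sq_sqrt (dot3_self_nonneg x)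

lemma dot3_cs (x y : Fin 3 → ℝ) : dot3 x y ≤ norm3 x * norm3 y := by
  have h : (dot3 x y) ^ 2 ≤ (norm3 x * norm3 y) ^ 2 := by
    have := Finset.sum_mul_sq_le_sq_mul_sq Finset.univ x y
    have hx : ∑ i, x i ^ 2 = dot3 x x := by simp [dot3, sq]
    have hy : ∑ i, y i ^ 2 = dot3 y y := by simp [dot3, sq]
    rw [hx, hy] at this
    rw [mul_pow, norm3_sq, norm3_sq]
    exact this
  have hp : 0 ≤ norm3 x * norm3 y := mul_nonneg (norm3_nonneg x) (norm3_nonneg y)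
  nlinarith [sq_nonneg (dot3 x y - norm3 x * norm3 y), sq_nonneg (dot3 x y + norm3 x * norm3 y)]

lemma dot3_cs' (x y : Fin 3 → ℝ) : -(norm3 x * norm3 y) ≤ dot3 x y := by
  have h := dot3_cs (-x) y
  have hnx : norm3 (-x) = norm3 x := by
    unfold norm3 dot3; congr 1; apply Finset.sum_congr rfl; intros; simp
  have hd : dot3 (-x) y = -dot3 x y := by
    unfold dot3; rw [← Finset.sum_neg_distrib]
    apply Finset.sum_congr rfl; intros; simp
  rw [hnx, hd] at h
  linarith

lemma dot3_dot (x y : Fin 3 → ℝ) : dot3 x y = x ⬝ᵥ y := rfl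

set_option maxHeartbeats 1000000 in
/-- The pointwise estimate `ε𝒲̇ ≤ −ζᵀUζ` for the boundary-layer
Lyapunov function: with `a = ē_R`, `b = e_Ω`, `d = ė_R`, `‖d‖ ≤ ‖b‖`, one has
`⟨b + c₃J⁻¹a, −k_Ra − k_Ωb⟩ + k_R⟨a,b⟩ + c₃⟨d,b⟩ ≤ −ζᵀUζ`. -/
theorem boundary_layer_lyapunov_decay (kR kΩ c₃ lm lM : ℝ)
    (hkR : 0 < kR) (hkΩ : 0 < kΩ) (hc₃ : 0 < c₃)
    (hlm : 0 < lm) (hlM : 0 < lM) (hl : lm ≤ lM)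
    (J : Matrix (Fin 3) (Fin 3) ℝ) (hJsymm : Jᵀ = J) (hJinv : IsUnit J.det)
    (hJ : ∀ v : Fin 3 → ℝ,
      lm * dot3 v v ≤ dot3 v (J *ᵥ v) ∧ dot3 v (J *ᵥ v) ≤ lM * dot3 v v)
    (a b d : Fin 3 → ℝ) (hd : norm3 d ≤ norm3 b)
    (ζ : Fin 2 → ℝ) (hζ : ζ = ![norm3 a, norm3 b]) :
    dot3 (b + c₃ • (J⁻¹ *ᵥ a)) (-(kR • a) - kΩ • b) + kR * dot3 a b + c₃ * dot3 d b ≤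
      -(ζ ⬝ᵥ ((!![c₃ * kR / lM, -c₃ * kΩ / (2 * lm);
                  -c₃ * kΩ / (2 * lm), kΩ - c₃]) *ᵥ ζ)) := by
  set w : Fin 3 → ℝ := J⁻¹ *ᵥ a with hw
  have hJw : J *ᵥ w = a := by
    rw [hw, Matrix.mulVec_mulVec, Matrix.mul_nonsing_inv J hJinv, Matrix.one_mulVec]
  -- symmetry of the bilinear form
  have hsymm : ∀ x y : Fin 3 → ℝ, dot3 x (J *ᵥ y) = dot3 y (J *ᵥ x) := by
    intro x y
    rw [dot3_dot, dot3_dot, Matrix.dotProduct_mulVec, ← Matrix.mulVec_transpose, hJsymm,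
      dotProduct_comm]
  set na := norm3 a with hna
  set nb := norm3 b with hnb
  set nw := norm3 w with hnw
  have hna0 : 0 ≤ na := norm3_nonneg a
  have hnb0 : 0 ≤ nb := norm3_nonneg b
  have hnw0 : 0 ≤ nw := norm3_nonneg w
  have hnasq : na ^ 2 = dot3 a a := norm3_sq a
  have hnbsq : nb ^ 2 = dot3 b b := norm3_sq b
  have hnwsq : nw ^ 2 = dot3 w w := norm3_sq w
  -- dot3 w a = B(w,w) ≥ lm nw²
  have hwa : dot3 w a = dot3 w (J *ᵥ w) := by rw [hJw]
  have hwa_lb : lm * nw ^ 2 ≤ dot3 w a := by rw [hwa, hnwsq]; exact (hJ w).1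
  have hwa_nonneg : 0 ≤ dot3 w a := le_trans (mul_nonneg hlm.le (sq_nonneg nw)) hwa_lb
  -- lm * nw ≤ na
  have hnwna : lm * nw ≤ na := by
    have h1 : dot3 w a ≤ nw * na := dot3_cs w a
    rcases eq_or_lt_of_le hnw0 with h | h
    · nlinarith
    · nlinarith
  -- Cauchy-Schwarz for the J-form: (dot3 a a)² ≤ dot3 w a * dot3 a (J *ᵥ a)
  have hBcs : (dot3 a a) ^ 2 ≤ dot3 w a * dot3 a (J *ᵥ a) := by
    set α := dot3 a (J *ᵥ a) with hα
    have hα0 : 0 ≤ α := le_trans (mul_nonneg hlm.le (dot3_self_nonneg a)) (hJ a).1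
    rcases eq_or_lt_of_le hα0 with h0 | h0
    · -- α = 0 forces a = 0
      have haa : dot3 a a = 0 := by
        have := (hJ a).1
        have := dot3_self_nonneg a
        nlinarith
      rw [haa]
      nlinarith
    · set β := dot3 a a with hβ
      set v : Fin 3 → ℝ := α • w - β • a with hv
      have hv0 : 0 ≤ dot3 v (J *ᵥ v) :=
        le_trans (mul_nonneg hlm.le (dot3_self_nonneg v)) (hJ v).1
      have hexp : dot3 v (J *ᵥ v)
          = α ^ 2 * dot3 w (J *ᵥ w) - 2 * α * β * dot3 w (J *ᵥ a) + β ^ 2 * α := by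
        rw [hv]
        simp only [dot3_dot, Matrix.mulVec_sub, Matrix.mulVec_smul, sub_dotProduct,
          dotProduct_sub, smul_dotProduct, dotProduct_smul,
          smul_eq_mul]
        rw [show a ⬝ᵥ J *ᵥ w = w ⬝ᵥ J *ᵥ a from hsymm a w,
          ← dot3_dot a (J *ᵥ a), ← hα]
        ring
      have hwJa : dot3 w (J *ᵥ a) = dot3 a a := by rw [hsymm, hJw]
      rw [hwJa] at hexp
      rw [hwa]
      nlinarith [hv0, hexp]
  have hJaa_ub : dot3 a (J *ᵥ a) ≤ lM * na ^ 2 := by rw [hnasq]; exact (hJ a).2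
  -- dot3 w a * lM ≥ na²
  have hwa_lM : na ^ 2 ≤ lM * dot3 w a := by
    rcases eq_or_lt_of_le hna0 with h | h
    · rw [← h]; nlinarith
    · have h2 : (na ^ 2) ^ 2 ≤ dot3 w a * (lM * na ^ 2) := by
        calc (na ^ 2) ^ 2 = (dot3 a a) ^ 2 := by rw [hnasq]
          _ ≤ dot3 w a * dot3 a (J *ᵥ a) := hBcs
          _ ≤ dot3 w a * (lM * na ^ 2) := by
              apply mul_le_mul_of_nonneg_left hJaa_ub hwa_nonneg
      have hna2 : 0 < na ^ 2 := by positivity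
      have h3 : na ^ 2 * na ^ 2 ≤ (lM * dot3 w a) * na ^ 2 := by linear_combination h2
      exact le_of_mul_le_mul_right h3 hna2
  -- bound dot3 w b
  have hwb : -(nw * nb) ≤ dot3 w b := dot3_cs' w b
  -- bound dot3 d b
  have hdb : dot3 d b ≤ nb * nb := by
    have := dot3_cs d b
    nlinarith [norm3_nonneg d]
  -- expand LHS
  have hLHS : dot3 (b + c₃ • w) (-(kR • a) - kΩ • b) + kR * dot3 a b + c₃ * dot3 d b
      = -(kΩ * dot3 b b) - c₃ * kR * dot3 w a - c₃ * kΩ * dot3 w b + c₃ * dot3 d b := by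
    simp only [dot3, Fin.sum_univ_three, Pi.add_apply, Pi.sub_apply, Pi.neg_apply,
      Pi.smul_apply, smul_eq_mul]
    ring
  -- expand RHS
  have hRHS : -(ζ ⬝ᵥ ((!![c₃ * kR / lM, -c₃ * kΩ / (2 * lm);
                  -c₃ * kΩ / (2 * lm), kΩ - c₃]) *ᵥ ζ))
      = -(c₃ * kR / lM) * na ^ 2 + (c₃ * kΩ / lm) * na * nb - (kΩ - c₃) * nb ^ 2 := by
    subst hζ
    simp only [dotProduct, Matrix.mulVec, Fin.sum_univ_two, Matrix.cons_val',
      Matrix.cons_val_zero, Matrix.cons_val_one, Matrix.head_cons, Matrix.empty_val',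
      Matrix.cons_val_fin_one, Matrix.head_fin_const, Matrix.of_apply]
    ring
  rw [hLHS, hRHS]
  -- the key inequalities
  have h1 : -(c₃ * kR) * dot3 w a ≤ -(c₃ * kR / lM) * na ^ 2 := by
    have := mul_le_mul_of_nonneg_left hwa_lM (le_of_lt (by positivity : (0:ℝ) < c₃ * kR / lM))
    have hlM' : c₃ * kR / lM * (lM * dot3 w a) = c₃ * kR * dot3 w a := by
      field_simp
    linarith
  have h2 : -(c₃ * kΩ) * dot3 w b ≤ (c₃ * kΩ / lm) * na * nb := by
    have h3 : c₃ * kΩ * (nw * nb) ≤ (c₃ * kΩ / lm) * na * nb := by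
      have : lm * nw * nb ≤ na * nb := mul_le_mul_of_nonneg_right hnwna hnb0
      rw [div_mul_eq_mul_div, div_mul_eq_mul_div, le_div_iff₀ hlm]
      nlinarith [mul_le_mul_of_nonneg_left this (le_of_lt (by positivity : (0:ℝ) < c₃ * kΩ))]
    linarith [mul_le_mul_of_nonneg_left hwb (le_of_lt (by positivity : (0:ℝ) < c₃ * kΩ))]
  have h4 : c₃ * dot3 d b ≤ c₃ * nb ^ 2 := by nlinarith
  rw [← hnbsq]
  linarith [h1, h2, h4]
end
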